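/- arXiv:1704.01862 — 3 statements merged into one kernel-verified Lean document; each statement's English description precedes it below -/
import Mathlib

section
/- Let 0 < ε ≤ 1/2, let X ⊆ ℝ^d be finite and (k,ε)-irreducible with optimal k-means partition X₁,…,X_k, let 1 ≤ i < k, and let C_i be a set of i centers satisfying the invariant P(i). Let S consist of N = ⌈2¹²·k³/ε²⌉ independent D²-samples from X w.r.t. C_i, and for j ∈ {i+1,…,k} let |S_j| be the number of samples lying in X_j. Then the probability that the maximum of |S_j| over j ∈ {i+1,…,k} is not attained at an index of J (i.e., max_{j∈J} |S_j| ≤ max_{j∈{i+1,…,k}∖J} |S_j| when {i+1,…,k}∖J is nonempty) is at most 1/(4k). -/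
open Finset
open scoped BigOperators
open Classical

noncomputable section

/-- Points of `ℝ^d`. -/
abbrev Pt (d : ℕ) := EuclideanSpace ℝ (Fin d)

/-- `Φ(C, X) = Σ_{x ∈ X} min_{c ∈ C} ‖x - c‖²`. -/
noncomputable def Phi {d : ℕ} (C X : Finset (Pt d)) : ℝ :=
  ∑ x ∈ X, sInf ((fun c => ‖x - c‖ ^ 2) '' (C : Set (Pt d)))

/-- The centroid `μ(X)` of a finite set of points. -/
noncomputable def ctr {d : ℕ} (X : Finset (Pt d)) : Pt d :=
  (X.card : ℝ)⁻¹ • ∑ x ∈ X, x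

/-- `Δ₁(X) = Φ({μ(X)}, X)`. -/
noncomputable def Delta1 {d : ℕ} (X : Finset (Pt d)) : ℝ := Phi {ctr X} X

/-- `Δ_k(X)`: the optimal `k`-means cost of `X`. -/
noncomputable def DeltaK {d : ℕ} (k : ℕ) (X : Finset (Pt d)) : ℝ :=
  sInf ((fun C => Phi C X) '' {C : Finset (Pt d) | C.card = k})

/-- `X₁, …, X_k` is an optimal `k`-means partition of `X`. -/
def IsOptPartition {d : ℕ} (k : ℕ) (X : Finset (Pt d)) (Xs : Fin k → Finset (Pt d)) : Prop :=
  (∀ j, (Xs j).Nonempty) ∧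
  (∀ j l, j ≠ l → Disjoint (Xs j) (Xs l)) ∧
  Finset.univ.biUnion Xs = X ∧
  ∑ j, Delta1 (Xs j) = DeltaK k X

/-- `X` is `(k, ε)`-irreducible: `Δ_{k-1}(X) ≥ (1+ε)·Δ_k(X)`. -/
def KIrreducible {d : ℕ} (k : ℕ) (ε : ℝ) (X : Finset (Pt d)) : Prop :=
  (1 + ε) * DeltaK k X ≤ DeltaK (k - 1) X

/-- The invariant `P(i)`: `Ci` consists of the centers `c r` for `r < i` (clusters reindexed
so that the covered clusters come first), each `c r` is a `(1 + ε/16)`-good center for the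
optimal cluster `Xs r`, and `Φ(Ci, X) > 0`. -/
def InvariantP {d k : ℕ} (ε : ℝ) (X : Finset (Pt d)) (Xs : Fin k → Finset (Pt d))
    (i : ℕ) (c : Fin k → Pt d) (Ci : Finset (Pt d)) : Prop :=
  Ci = Finset.image c (Finset.univ.filter (fun r : Fin k => r.val < i)) ∧
  (∀ r : Fin k, r.val < i → Phi {c r} (Xs r) ≤ (1 + ε / 16) * Delta1 (Xs r)) ∧
  0 < Phi Ci X


/-!
Irreducibility forces the current centers to cost at least `(1 + ε) Δ_k(X)`, while the covered
clusters cost at most `(1 + ε/16) Δ_k(X)`; hence some uncovered cluster `X_h` carries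
`D²`-mass at least `ε/(2k) = 4δ`, where `δ = ε/(8k)`. A light uncovered cluster `X_j` (mass
below `δ`) is sampled at least as often as `X_h` only if `2 ^ (|S_j| - |S_h|) ≥ 1`, and the
expectation of this quantity over `N` independent samples is
`(1 + P(X_j) - P(X_h)/2) ^ N ≤ (1 - δ) ^ N`. A union bound over the at most `k` light clusters
and `(1 - δ) ^ N ≤ 1/(1 + Nδ)` with `Nδ ≥ 4k²` finish the proof.
-/

lemma Phi_nonneg {d : ℕ} (C X : Finset (Pt d)) : 0 ≤ Phi C X :=
  sum_nonneg fun _ _ => Real.sInf_nonneg (by rintro _ ⟨c, _, rfl⟩; positivity)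

lemma Phi_eq_sum_Phi_singleton {d : ℕ} (C X : Finset (Pt d)) :
    Phi C X = ∑ x ∈ X, Phi C {x} := by
  simp [Phi]

lemma Phi_biUnion {d : ℕ} {ι : Type*} (C : Finset (Pt d)) (s : Finset ι)
    {Xs : ι → Finset (Pt d)} (h : (s : Set ι).PairwiseDisjoint Xs) :
    Phi C (s.biUnion Xs) = ∑ j ∈ s, Phi C (Xs j) :=
  sum_biUnion h

lemma sum_Phi_singleton_filter_mem {d : ℕ} (C : Finset (Pt d)) {X Y : Finset (Pt d)}
    (hY : Y ⊆ X) :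
    ∑ x ∈ univ.filter fun x : {x // x ∈ X} => (x : Pt d) ∈ Y, Phi C {(x : Pt d)} = Phi C Y := by
  rw [sum_filter, sum_coe_sort X fun y => if y ∈ Y then Phi C {y} else 0, ← sum_filter,
    filter_mem_eq_inter, inter_eq_right.mpr hY, ← Phi_eq_sum_Phi_singleton]

lemma Phi_le_Phi_singleton_of_mem {d : ℕ} {C : Finset (Pt d)} {c : Pt d} (hc : c ∈ C)
    (X : Finset (Pt d)) : Phi C X ≤ Phi {c} X := by
  refine sum_le_sum fun x _ => ?_
  rw [coe_singleton, Set.image_singleton, csInf_singleton]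
  exact csInf_le ⟨0, by rintro _ ⟨c, _, rfl⟩; positivity⟩ ⟨c, hc, rfl⟩

lemma Phi_anti_left {d : ℕ} {C C' : Finset (Pt d)} (h : C ⊆ C') (hC : C.Nonempty)
    (X : Finset (Pt d)) : Phi C' X ≤ Phi C X :=
  sum_le_sum fun _ _ => csInf_le_csInf ⟨0, by rintro _ ⟨c, _, rfl⟩; positivity⟩
    ((coe_nonempty.mpr hC).image _)
    (Set.image_mono (coe_subset.mpr h))

lemma exists_mem_notMem_of_Phi_pos {d : ℕ} {C X : Finset (Pt d)} (h : 0 < Phi C X) :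
    ∃ x ∈ X, x ∉ C := by
  by_contra! hXC
  have : Phi C X ≤ 0 := by
    rw [Phi_eq_sum_Phi_singleton]
    refine sum_nonpos fun x hx => ?_
    simpa [Phi] using Phi_le_Phi_singleton_of_mem (hXC x hx) {x}
  linarith

lemma nonempty_of_Phi_pos {d : ℕ} {C X : Finset (Pt d)} (h : 0 < Phi C X) : C.Nonempty := by
  rw [nonempty_iff_ne_empty]
  rintro rfl
  simp [Phi] at h

lemma DeltaK_le_Phi {d k : ℕ} {C : Finset (Pt d)} (hC : C.card = k) (X : Finset (Pt d)) :
    DeltaK k X ≤ Phi C X :=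
  csInf_le ⟨0, by rintro _ ⟨C', _, rfl⟩; exact Phi_nonneg _ _⟩ ⟨C, hC, rfl⟩

lemma DeltaK_le_Phi_of_card_le {d k : ℕ} {C X : Finset (Pt d)} (hpos : 0 < Phi C X)
    (hk : C.card ≤ k) : DeltaK k X ≤ Phi C X := by
  obtain ⟨x, -, hx⟩ := exists_mem_notMem_of_Phi_pos hpos
  obtain ⟨c, hc⟩ := nonempty_of_Phi_pos hpos
  have : Nontrivial (Pt d) := ⟨⟨x, c, fun h => hx (h ▸ hc)⟩⟩
  have := Module.Free.infinite ℝ (Pt d)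
  obtain ⟨C', hCC', hC'⟩ := Infinite.exists_superset_card_eq C k hk
  exact (DeltaK_le_Phi hC' X).trans (Phi_anti_left hCC' ⟨c, hc⟩ X)

section Clusters

variable {d k : ℕ} {ε : ℝ} {X : Finset (Pt d)} {Xs : Fin k → Finset (Pt d)}

lemma IsOptPartition.subset (hopt : IsOptPartition k X Xs) (j : Fin k) : Xs j ⊆ X :=
  hopt.2.2.1 ▸ subset_biUnion_of_mem Xs (mem_univ j)

lemma IsOptPartition.Phi_eq_sum (hopt : IsOptPartition k X Xs) (C : Finset (Pt d)) :
    Phi C X = ∑ j, Phi C (Xs j) := by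
  rw [← hopt.2.2.1, Phi_biUnion C univ fun j _ l _ hjl => hopt.2.1 j l hjl]

variable {i : ℕ} {c : Fin k → Pt d} {Ci : Finset (Pt d)}

lemma InvariantP.card_le (hinv : InvariantP ε X Xs i c Ci) : Ci.card ≤ i := by
  rw [hinv.1]
  refine card_image_le.trans ?_
  calc #{r : Fin k | r.val < i} ≤ #(range i) :=
        card_le_card_of_injOn Fin.val (fun r hr => by simpa using hr) Fin.val_injective.injOn
    _ = i := card_range i

lemma InvariantP.DeltaK_pred_le_Phi (hinv : InvariantP ε X Xs i c Ci) (hik : i < k) :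
    DeltaK (k - 1) X ≤ Phi Ci X :=
  DeltaK_le_Phi_of_card_le hinv.2.2 (hinv.card_le.trans (by omega))

lemma InvariantP.sum_covered_le (hinv : InvariantP ε X Xs i c Ci)
    (hopt : IsOptPartition k X Xs) (hε : 0 ≤ ε) :
    ∑ j with j.val < i, Phi Ci (Xs j) ≤ (1 + ε / 16) * DeltaK k X := by
  have hgood : ∀ j : Fin k, j.val < i → Phi Ci (Xs j) ≤ (1 + ε / 16) * Delta1 (Xs j) :=
    fun j hj => (Phi_le_Phi_singleton_of_mem (hinv.1 ▸ mem_image_of_mem c (by simpa using hj))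
      (Xs j)).trans (hinv.2.1 j hj)
  calc ∑ j with j.val < i, Phi Ci (Xs j)
      ≤ ∑ j with j.val < i, (1 + ε / 16) * Delta1 (Xs j) :=
        sum_le_sum fun j hj => hgood j (mem_filter.mp hj).2
    _ ≤ ∑ j, (1 + ε / 16) * Delta1 (Xs j) :=
        sum_le_sum_of_subset_of_nonneg (filter_subset _ _)
          fun j _ _ => mul_nonneg (by linarith) (Phi_nonneg _ _)
    _ = (1 + ε / 16) * DeltaK k X := by rw [← mul_sum, hopt.2.2.2]

lemma InvariantP.sum_uncovered_ge (hinv : InvariantP ε X Xs i c Ci)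
    (hopt : IsOptPartition k X Xs) (hirr : KIrreducible k ε X) (hε0 : 0 ≤ ε) (hε : ε ≤ 1 / 2)
    (hik : i < k) :
    ε / 2 * Phi Ci X ≤ ∑ j with i ≤ j.val, Phi Ci (Xs j) := by
  have hsplit : Phi Ci X =
      ∑ j with j.val < i, Phi Ci (Xs j) + ∑ j with i ≤ j.val, Phi Ci (Xs j) := by
    rw [hopt.Phi_eq_sum, ← sum_filter_add_sum_filter_not univ (fun j : Fin k => j.val < i)]
    simp only [not_lt]
  have hcov := hinv.sum_covered_le hopt hε0
  have hirr' : (1 + ε) * DeltaK k X ≤ Phi Ci X := hirr.trans (hinv.DeltaK_pred_le_Phi hik)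
  have hkey : (1 + ε / 16) * DeltaK k X ≤ (1 - ε / 2) * Phi Ci X := by
    refine le_of_mul_le_mul_left ?_ (by linarith : (0 : ℝ) < 1 + ε)
    nlinarith [mul_le_mul_of_nonneg_left hirr' (by linarith : (0 : ℝ) ≤ 1 + ε / 16),
      mul_nonneg (mul_nonneg hε0 (by linarith : (0 : ℝ) ≤ 7 / 16 - ε / 2)) (Phi_nonneg Ci X)]
  linarith

lemma InvariantP.exists_uncovered_ge (hinv : InvariantP ε X Xs i c Ci)
    (hopt : IsOptPartition k X Xs) (hirr : KIrreducible k ε X) (hε0 : 0 ≤ ε) (hε : ε ≤ 1 / 2)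
    (hik : i < k) :
    ∃ j : Fin k, i ≤ j.val ∧ ε / (2 * k) * Phi Ci X ≤ Phi Ci (Xs j) := by
  have hne : ({j : Fin k | i ≤ j.val} : Finset (Fin k)).Nonempty := ⟨⟨i, hik⟩, by simp⟩
  have hk : (0 : ℝ) < k := by exact_mod_cast (by omega : 0 < k)
  obtain ⟨j, hj, hjge⟩ := exists_le_of_sum_le hne <| calc
    ∑ _j ∈ ({j : Fin k | i ≤ j.val} : Finset (Fin k)), ε / (2 * k) * Phi Ci X
        ≤ k * (ε / (2 * k) * Phi Ci X) := by
          rw [sum_const, nsmul_eq_mul]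
          gcongr
          · exact mul_nonneg (by positivity) (Phi_nonneg _ _)
          · exact_mod_cast (card_filter_le _ _).trans (card_fin k).le
    _ = ε / 2 * Phi Ci X := by field_simp
    _ ≤ _ := hinv.sum_uncovered_ge hopt hirr hε0 hε hik
  exact ⟨j, (mem_filter.mp hj).2, hjge⟩

end Clusters

section Tilt

variable {α : Type*} (A B : α → Prop) [DecidablePred A] [DecidablePred B]

def tilt (x : α) : ℝ := (if A x then 2 else 1) * (if B x then 2⁻¹ else 1)

lemma tilt_nonneg (x : α) : 0 ≤ tilt A B x := by
  unfold tilt; split_ifs <;> norm_num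

lemma prod_tilt {N : ℕ} (s : Fin N → α) :
    ∏ t, tilt A B (s t) = 2 ^ #{t | A (s t)} * 2⁻¹ ^ #{t | B (s t)} := by
  simp only [tilt, prod_mul_distrib, prod_ite, prod_const, one_pow, mul_one]

lemma one_le_prod_tilt {N : ℕ} {s : Fin N → α} (h : #{t | B (s t)} ≤ #{t | A (s t)}) :
    1 ≤ ∏ t, tilt A B (s t) := by
  rw [prod_tilt, inv_pow, ← div_eq_mul_inv, one_le_div (by positivity)]
  exact pow_le_pow_right₀ one_le_two h

lemma sum_mul_tilt [Fintype α] (p : α → ℝ) (hAB : ∀ x, A x → ¬B x) :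
    ∑ x, p x * tilt A B x = ∑ x, p x + ∑ x with A x, p x - (∑ x with B x, p x) / 2 := by
  rw [sum_filter, sum_filter, sum_div, ← sum_add_distrib, ← sum_sub_distrib]
  refine sum_congr rfl fun x _ => ?_
  by_cases hA : A x
  · simp [tilt, hA, hAB x hA]; ring
  · by_cases hB : B x <;> simp [tilt, hA, hB]; ring

end Tilt

lemma exists_mem_le_of_sup_le {ι α : Type*} [LinearOrder α] [OrderBot α] {s t : Finset ι}
    {f : ι → α} {a : ι} (ha : a ∈ s) (ht : t.Nonempty) (h : s.sup f ≤ t.sup f) :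
    ∃ b ∈ t, f a ≤ f b := by
  obtain ⟨b, hb, hbt⟩ := t.exists_mem_eq_sup ht f
  exact ⟨b, hb, (le_sup ha).trans (h.trans hbt.le)⟩

/-- Markov's inequality for the exponential moments `∏ t, w j (s t)`, combined with a union
bound over `j ∈ L`; the moments of an i.i.d. sample factor into `N`-th powers. -/
lemma sum_prod_le_sum_pow {α ι : Type*} [Fintype α] {N : ℕ} {p : α → ℝ} (hp : ∀ x, 0 ≤ p x)
    {w : ι → α → ℝ} (hw : ∀ j x, 0 ≤ w j x) {B : Finset (Fin N → α)} {L : Finset ι}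
    (hB : ∀ s ∈ B, ∃ j ∈ L, 1 ≤ ∏ t, w j (s t)) :
    ∑ s ∈ B, ∏ t, p (s t) ≤ ∑ j ∈ L, (∑ x, p x * w j x) ^ N := by
  have hpos : ∀ s : Fin N → α, 0 ≤ ∏ t, p (s t) := fun s => prod_nonneg fun t _ => hp _
  calc ∑ s ∈ B, ∏ t, p (s t)
      ≤ ∑ s ∈ B, (∏ t, p (s t)) * ∑ j ∈ L, ∏ t, w j (s t) := by
        refine sum_le_sum fun s hs => le_mul_of_one_le_right (hpos s) ?_
        obtain ⟨j, hj, h1⟩ := hB s hs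
        exact h1.trans (single_le_sum (f := fun j => ∏ t, w j (s t))
          (fun j _ => prod_nonneg fun t _ => hw j _) hj)
    _ ≤ ∑ s : Fin N → α, (∏ t, p (s t)) * ∑ j ∈ L, ∏ t, w j (s t) :=
        sum_le_sum_of_subset_of_nonneg (subset_univ B) fun s _ _ =>
          mul_nonneg (hpos s) (sum_nonneg fun j _ => prod_nonneg fun t _ => hw j _)
    _ = ∑ j ∈ L, ∑ s : Fin N → α, ∏ t, p (s t) * w j (s t) := by
        simp_rw [mul_sum, ← prod_mul_distrib]
        exact sum_comm
    _ = ∑ j ∈ L, (∑ x, p x * w j x) ^ N := by simp_rw [Fintype.sum_pow]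

lemma one_sub_pow_le_inv_one_add_mul {δ : ℝ} (hδ0 : 0 ≤ δ) (hδ1 : δ ≤ 1) (N : ℕ) :
    (1 - δ) ^ N ≤ (1 + N * δ)⁻¹ := by
  rw [← one_div, le_div_iff₀ (by positivity)]
  calc (1 - δ) ^ N * (1 + N * δ) ≤ (1 - δ) ^ N * (1 + δ) ^ N :=
        mul_le_mul_of_nonneg_left (one_add_mul_le_pow (by linarith) N)
          (pow_nonneg (by linarith) N)
    _ = (1 - δ ^ 2) ^ N := by rw [← mul_pow]; ring
    _ ≤ 1 := pow_le_one₀ (by nlinarith) (by nlinarith)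

def D2 {d : ℕ} (C X : Finset (Pt d)) (x : {x // x ∈ X}) : ℝ := Phi C {(x : Pt d)} / Phi C X

lemma D2_nonneg {d : ℕ} (C X : Finset (Pt d)) (x : {x // x ∈ X}) : 0 ≤ D2 C X x :=
  div_nonneg (Phi_nonneg _ _) (Phi_nonneg _ _)

lemma sum_D2_mul_tilt_le {d : ℕ} {C X Y Z : Finset (Pt d)} {δ : ℝ} (hY : Y ⊆ X) (hZ : Z ⊆ X)
    (hYZ : Disjoint Y Z) (hΦ : 0 < Phi C X) (hYδ : Phi C Y ≤ δ * Phi C X)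
    (hZδ : 4 * δ * Phi C X ≤ Phi C Z) :
    ∑ x, D2 C X x * tilt (fun x : {x // x ∈ X} => (x : Pt d) ∈ Y) (fun x => (x : Pt d) ∈ Z) x ≤
      1 - δ := by
  unfold D2
  rw [sum_mul_tilt _ _ _ fun x hxY hxZ => disjoint_left.mp hYZ hxY hxZ, ← sum_div, ← sum_div,
    ← sum_div, sum_coe_sort X fun y => Phi C {y}, ← Phi_eq_sum_Phi_singleton,
    sum_Phi_singleton_filter_mem C hY, sum_Phi_singleton_filter_mem C hZ, div_self hΦ.ne']
  have hY' : Phi C Y / Phi C X ≤ δ := (div_le_iff₀ hΦ).mpr hYδ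
  have hZ' : 4 * δ ≤ Phi C Z / Phi C X := (le_div_iff₀ hΦ).mpr hZδ
  linarith

lemma mul_one_sub_pow_le {k m N : ℕ} {ε : ℝ} (hk : 0 < k) (hm : m ≤ k) (hε0 : 0 < ε)
    (hε : ε ≤ 1 / 2) (hN : N = ⌈(2 ^ 12 * k ^ 3 : ℝ) / ε ^ 2⌉₊) :
    m * (1 - ε / (8 * k)) ^ N ≤ 1 / (4 * k) := by
  have hk' : (1 : ℝ) ≤ k := by exact_mod_cast hk
  have hδ0 : 0 ≤ ε / (8 * k) := by positivity
  have hδ1 : ε / (8 * k) ≤ 1 := by rw [div_le_one (by positivity)]; nlinarith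
  have hNδ : 4 * (k : ℝ) ^ 2 ≤ N * (ε / (8 * k)) := calc
    4 * (k : ℝ) ^ 2 ≤ 2 ^ 9 * k ^ 2 / ε := by
        rw [le_div_iff₀ hε0]; nlinarith [sq_nonneg (k : ℝ)]
    _ = (2 ^ 12 * k ^ 3 : ℝ) / ε ^ 2 * (ε / (8 * k)) := by field_simp; ring
    _ ≤ N * (ε / (8 * k)) := by rw [hN]; gcongr; exact Nat.le_ceil _
  calc m * (1 - ε / (8 * k)) ^ N ≤ k * (1 + N * (ε / (8 * k)))⁻¹ :=
        mul_le_mul (by exact_mod_cast hm) (one_sub_pow_le_inv_one_add_mul hδ0 hδ1 N)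
          (pow_nonneg (by linarith) N) (by positivity)
    _ ≤ 1 / (4 * k) := by
        rw [← div_eq_mul_inv, div_le_div_iff₀ (by positivity) (by positivity)]
        nlinarith

theorem stmt_13_general {d k : ℕ} (ε : ℝ) (hε0 : 0 < ε) (hε : ε ≤ 1 / 2)
    (X : Finset (Pt d)) (hirr : KIrreducible k ε X)
    (Xs : Fin k → Finset (Pt d)) (hopt : IsOptPartition k X Xs)
    (i : ℕ) (hik : i < k)
    (c : Fin k → Pt d) (Ci : Finset (Pt d)) (hinv : InvariantP ε X Xs i c Ci)
    (N : ℕ) (hN : N = ⌈(2 ^ 12 * k ^ 3 : ℝ) / ε ^ 2⌉₊) :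
    ∑ s ∈ (Finset.univ : Finset (Fin N → {x // x ∈ X})).filter
        (fun s =>
          (Finset.univ.filter (fun j : Fin k => i ≤ j.val ∧
              ¬((ε / (8 * k)) * Phi Ci X ≤ Phi Ci (Xs j)))).Nonempty ∧
          (Finset.univ.filter (fun j : Fin k => i ≤ j.val ∧
              (ε / (8 * k)) * Phi Ci X ≤ Phi Ci (Xs j))).sup
              (fun j => (Finset.univ.filter (fun t : Fin N => (s t : Pt d) ∈ Xs j)).card) ≤
            (Finset.univ.filter (fun j : Fin k => i ≤ j.val ∧
                ¬((ε / (8 * k)) * Phi Ci X ≤ Phi Ci (Xs j)))).sup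
              (fun j => (Finset.univ.filter (fun t : Fin N => (s t : Pt d) ∈ Xs j)).card)),
      ∏ t : Fin N, (Phi Ci {(s t : Pt d)} / Phi Ci X) ≤
    1 / (4 * k) := by
  set δ := ε / (8 * k)
  have hΦ : 0 < Phi Ci X := hinv.2.2
  obtain ⟨jh, hjh, hjh_ge⟩ := hinv.exists_uncovered_ge hopt hirr hε0.le hε hik
  have hjh_heavy : 4 * δ * Phi Ci X ≤ Phi Ci (Xs jh) := by
    rwa [show 4 * δ = ε / (2 * k) by simp only [δ]; field_simp; ring]
  have hjh_mem : jh ∈ univ.filter fun j : Fin k => i ≤ j.val ∧ δ * Phi Ci X ≤ Phi Ci (Xs j) :=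
    mem_filter.mpr ⟨mem_univ _, hjh, by nlinarith [mul_nonneg (by positivity : 0 ≤ δ) hΦ.le]⟩
  set L := univ.filter fun j : Fin k => i ≤ j.val ∧ ¬(δ * Phi Ci X ≤ Phi Ci (Xs j))
  set w := fun j => tilt (fun x : {x // x ∈ X} => (x : Pt d) ∈ Xs j) (fun x => (x : Pt d) ∈ Xs jh)
  calc _ ≤ ∑ j ∈ L, (∑ x, D2 Ci X x * w j x) ^ N := by
        refine sum_prod_le_sum_pow (D2_nonneg Ci X) (fun j => tilt_nonneg _ _) fun s hs => ?_
        obtain ⟨-, hL, hsup⟩ := mem_filter.mp hs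
        obtain ⟨j, hjL, hj⟩ := exists_mem_le_of_sup_le hjh_mem hL hsup
        exact ⟨j, hjL, one_le_prod_tilt _ _ hj⟩
    _ ≤ ∑ j ∈ L, (1 - δ) ^ N := by
        refine sum_le_sum fun j hj => pow_le_pow_left₀
          (sum_nonneg fun x _ => mul_nonneg (D2_nonneg Ci X x) (tilt_nonneg _ _ x)) ?_ N
        have hj_light := (mem_filter.mp hj).2.2
        have hjh_ne : j ≠ jh := fun h => hj_light (h ▸ (mem_filter.mp hjh_mem).2.2)
        exact sum_D2_mul_tilt_le (hopt.subset j) (hopt.subset jh) (hopt.2.1 j jh hjh_ne) hΦ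
          (not_le.mp hj_light).le hjh_heavy
    _ = #L * (1 - δ) ^ N := by rw [sum_const, nsmul_eq_mul]
    _ ≤ 1 / (4 * k) :=
        mul_one_sub_pow_le (by omega) ((card_filter_le _ _).trans (card_fin k).le) hε0 hε hN

/-- Under the invariant `P(i)` (clusters reindexed so the covered clusters
are `X₁, …, X_i`), let `S` consist of `N = ⌈2¹²·k³/ε²⌉` independent `D²`-samples from `X`
w.r.t. `C_i`, and for an uncovered cluster `X_j` let `|S_j|` be the number of samples in
`X_j`. With `J = {j ∈ {i+1,…,k} : Φ(C_i, X_j) ≥ (ε/(8k))·Φ(C_i, X)}`, the probability that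
the maximum of `|S_j|` over uncovered `j` is not attained on `J` (i.e. `{i+1,…,k} ∖ J` is
nonempty and `max_{j∈J} |S_j| ≤ max_{j∈{i+1,…,k}∖J} |S_j|`) is at most `1/(4k)`. -/
theorem stmt_13 {d k : ℕ} (ε : ℝ) (hε0 : 0 < ε) (hε : ε ≤ 1 / 2)
    (X : Finset (Pt d)) (hirr : KIrreducible k ε X)
    (Xs : Fin k → Finset (Pt d)) (hopt : IsOptPartition k X Xs)
    (i : ℕ) (hi : 1 ≤ i) (hik : i < k)
    (c : Fin k → Pt d) (Ci : Finset (Pt d)) (hinv : InvariantP ε X Xs i c Ci)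
    (N : ℕ) (hN : N = ⌈(2 ^ 12 * k ^ 3 : ℝ) / ε ^ 2⌉₊) :
    ∑ s ∈ (Finset.univ : Finset (Fin N → {x // x ∈ X})).filter
        (fun s =>
          (Finset.univ.filter (fun j : Fin k => i ≤ j.val ∧
              ¬((ε / (8 * k)) * Phi Ci X ≤ Phi Ci (Xs j)))).Nonempty ∧
          (Finset.univ.filter (fun j : Fin k => i ≤ j.val ∧
              (ε / (8 * k)) * Phi Ci X ≤ Phi Ci (Xs j))).sup
              (fun j => (Finset.univ.filter (fun t : Fin N => (s t : Pt d) ∈ Xs j)).card) ≤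
            (Finset.univ.filter (fun j : Fin k => i ≤ j.val ∧
                ¬((ε / (8 * k)) * Phi Ci X ≤ Phi Ci (Xs j)))).sup
              (fun j => (Finset.univ.filter (fun t : Fin N => (s t : Pt d) ∈ Xs j)).card)),
      ∏ t : Fin N, (Phi Ci {(s t : Pt d)} / Phi Ci X) ≤
    1 / (4 * k) :=
  stmt_13_general ε hε0 hε X hirr Xs hopt i hik c Ci hinv N hN
end
end

section
/- Let 0 < ε ≤ 1/2, let X ⊆ ℝ^d be finite and (k,ε)-irreducible with optimal k-means partition X₁,…,X_k, let 1 ≤ i < k, and let C_i be a set of i centers satisfying the invariant P(i). Let j ∈ {i+1,…,k} and s ∈ Y_j, and consider one sampling trial: draw x via D²-sampling from X w.r.t. C_i; if x ∈ X_j, output x with probability (ε/128)·Φ(C_i,{s})/Φ(C_i,{x}), and otherwise output ⊥. Then: (a) (ε/128)·Φ(C_i,{s})/Φ(C_i,{x}) ≤ 1 for every x ∈ X_j, so the trial is well defined; (b) for every x ∈ X_j, Pr[output = x] = (ε/128)·Φ(C_i,{s})/Φ(C_i,X); in particular every point of X_j is output with the same probability; (c) if moreover j ∈ J, then Pr[output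 ≠ ⊥] ≥ ε³/(2¹⁶·k). -/
open Finset
open scoped BigOperators
open Classical

noncomputable section

/-! The heart is a pointwise lower bound: every point `x` of an uncovered optimal cluster `X_j`
satisfies `ε · Φ(C_i, X_j) ≤ 32 · m_j · Φ(C_i, {x})`.

Irreducibility separates the optimal centroids: replacing `μ_q` by `μ_p` uses `k - 1` centers and
costs `m_q ‖μ_p - μ_q‖²` extra, so `ε Δ₁(X_q) ≤ m_q ‖μ_p - μ_q‖²`. Let `c_p ∈ C_i` be the center
nearest to `x`, a good center of a covered cluster `X_p`, and `D = ‖μ_p - μ_j‖`. By the parallel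
axis theorem and separation, `‖c_p - μ_p‖ ≤ D/4`. Since `x` is at least as close to `μ_j` as to
`μ_p`, the triangle inequality gives `‖x - c_p‖ ≥ D/4`, while
`Φ(C_i, X_j) ≤ Φ({c_p}, X_j) ≤ Δ₁(X_j) + m_j (5D/4)² ≤ (1/ε + 25/16) m_j D²`.

With `s ∈ Y_j` the pointwise bound makes every acceptance probability at most `1/2`; the
`D²`-sampling weights then cancel, and for `j ∈ J` summing over `X_j` gives (c). -/

variable {d : ℕ}

lemma div_mul_div_cancel_of_imp {G₀ : Type*} [CommGroupWithZero G₀] {a b c : G₀}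
    (h : b = 0 → a = 0) : b / c * (a / b) = a / c := by
  rw [mul_comm, ← mul_div_assoc, div_mul_cancel_of_imp h]

lemma div_four_le_norm_sub {E : Type*} [SeminormedAddCommGroup E] {a b c x : E}
    (hx : ‖x - b‖ ≤ ‖x - a‖) (hc : ‖c - a‖ ≤ ‖a - b‖ / 4) : ‖a - b‖ / 4 ≤ ‖x - c‖ := by
  have h₁ := norm_sub_le_norm_sub_add_norm_sub a x b
  have h₂ := norm_sub_le_norm_sub_add_norm_sub x c a
  rw [norm_sub_rev a x] at h₁
  linarith

lemma bddBelow_image_norm_sub_sq (C : Set (Pt d)) (x : Pt d) :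
    BddBelow ((fun c => ‖x - c‖ ^ 2) '' C) :=
  ⟨0, by rintro _ ⟨c, -, rfl⟩; positivity⟩

lemma phi_nonneg (C X : Finset (Pt d)) : 0 ≤ Phi C X :=
  Finset.sum_nonneg fun _ _ => Real.sInf_nonneg (by rintro _ ⟨c, -, rfl⟩; positivity)

lemma phi_empty_left (X : Finset (Pt d)) : Phi ∅ X = 0 := by
  simp [Phi]

lemma nonempty_of_phi_pos {C X : Finset (Pt d)} (h : 0 < Phi C X) : C.Nonempty := by
  rw [Finset.nonempty_iff_ne_empty]
  rintro rfl
  exact h.ne' (phi_empty_left X)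

lemma phi_eq_sum_phi_singleton (C Y : Finset (Pt d)) : Phi C Y = ∑ y ∈ Y, Phi C {y} := by
  simp only [Phi, Finset.sum_singleton]

lemma phi_singleton_left (c : Pt d) (X : Finset (Pt d)) :
    Phi {c} X = ∑ x ∈ X, ‖x - c‖ ^ 2 := by
  simp [Phi]

lemma phi_singleton_le_of_mem {C : Finset (Pt d)} {c : Pt d} (hc : c ∈ C) (x : Pt d) :
    Phi C {x} ≤ ‖x - c‖ ^ 2 := by
  rw [Phi, Finset.sum_singleton]
  exact csInf_le (bddBelow_image_norm_sub_sq _ x) ⟨c, hc, rfl⟩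

lemma exists_phi_singleton_eq {C : Finset (Pt d)} (hC : C.Nonempty) (x : Pt d) :
    ∃ c ∈ C, Phi C {x} = ‖x - c‖ ^ 2 := by
  obtain ⟨c, hc, hmin⟩ := C.exists_min_image (fun c => ‖x - c‖ ^ 2) hC
  refine ⟨c, hc, (phi_singleton_le_of_mem hc x).antisymm ?_⟩
  rw [Phi, Finset.sum_singleton]
  exact le_csInf (hC.to_set.image _) (by rintro _ ⟨c', hc', rfl⟩; exact hmin c' hc')

lemma phi_le_of_subset {C C' : Finset (Pt d)} (h : C ⊆ C') (hC : C.Nonempty) (X : Finset (Pt d)) :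
    Phi C' X ≤ Phi C X :=
  Finset.sum_le_sum fun x _ => csInf_le_csInf (bddBelow_image_norm_sub_sq _ x)
    (hC.to_set.image _) (Set.image_mono (Finset.coe_subset.2 h))

lemma phi_le_phi_singleton {C : Finset (Pt d)} {c : Pt d} (hc : c ∈ C) (X : Finset (Pt d)) :
    Phi C X ≤ Phi {c} X :=
  phi_le_of_subset (Finset.singleton_subset_iff.2 hc) (Finset.singleton_nonempty c) X

lemma infinite_of_phi_pos {C X : Finset (Pt d)} (h : 0 < Phi C X) : Infinite (Pt d) := by
  have : Nontrivial (Pt d) := by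
    by_contra htriv
    have : Subsingleton (Pt d) := not_nontrivial_iff_subsingleton.1 htriv
    obtain ⟨c, hc⟩ := nonempty_of_phi_pos h
    have : Phi {c} X = 0 := by simp [phi_singleton_left, Subsingleton.elim _ c]
    linarith [phi_le_phi_singleton hc X]
  exact PreconnectedSpace.infinite

lemma phi_biUnion {ι : Type*} (s : Finset ι) {Xs : ι → Finset (Pt d)}
    (h : (s : Set ι).PairwiseDisjoint Xs) (C : Finset (Pt d)) :
    Phi C (s.biUnion Xs) = ∑ r ∈ s, Phi C (Xs r) :=
  Finset.sum_biUnion h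

lemma delta1_nonneg (X : Finset (Pt d)) : 0 ≤ Delta1 X :=
  phi_nonneg _ _

lemma phi_singleton_eq_delta1_add {X : Finset (Pt d)} (hX : X.Nonempty) (p : Pt d) :
    Phi {p} X = Delta1 X + X.card * ‖p - ctr X‖ ^ 2 := by
  have hcard : (X.card : ℝ) ≠ 0 := by exact_mod_cast hX.card_pos.ne'
  have hμ : ∑ x ∈ X, (x - ctr X) = 0 := by
    rw [Finset.sum_sub_distrib, Finset.sum_const, ctr, ← Nat.cast_smul_eq_nsmul ℝ, smul_smul,
      mul_inv_cancel₀ hcard, one_smul, sub_self]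
  have hsplit : ∀ x : Pt d, ‖x - p‖ ^ 2 =
      ‖x - ctr X‖ ^ 2 - 2 * inner ℝ (x - ctr X) (p - ctr X) + ‖p - ctr X‖ ^ 2 := by
    intro x
    rw [show x - p = (x - ctr X) - (p - ctr X) by abel, norm_sub_sq_real]
  rw [Delta1, phi_singleton_left, phi_singleton_left, Finset.sum_congr rfl fun x _ => hsplit x,
    Finset.sum_add_distrib, Finset.sum_sub_distrib, ← Finset.mul_sum, ← sum_inner, hμ,
    inner_zero_left, Finset.sum_const, nsmul_eq_mul]
  ring

lemma deltaK_le_phi [Infinite (Pt d)] {C X : Finset (Pt d)} {n : ℕ} (hC : C.Nonempty)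
    (h : C.card ≤ n) : DeltaK n X ≤ Phi C X := by
  obtain ⟨C', hsub, hcard⟩ := Infinite.exists_superset_card_eq C n h
  refine le_trans (csInf_le ⟨0, ?_⟩ ⟨C', hcard, rfl⟩) (phi_le_of_subset hsub hC X)
  rintro _ ⟨C'', -, rfl⟩
  exact phi_nonneg C'' X

lemma norm_sub_ctr_le_of_phi_le {Y : Finset (Pt d)} (hY : Y.Nonempty) {c : Pt d} {ε D : ℝ}
    (hc : Phi {c} Y ≤ (1 + ε / 16) * Delta1 Y) (hsep : ε * Delta1 Y ≤ Y.card * D ^ 2)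
    (hD : 0 ≤ D) : ‖c - ctr Y‖ ≤ D / 4 := by
  rw [phi_singleton_eq_delta1_add hY] at hc
  have hm : (0 : ℝ) < Y.card := by exact_mod_cast hY.card_pos
  have hsq : Y.card * ‖c - ctr Y‖ ^ 2 ≤ Y.card * (D / 4) ^ 2 := by linarith
  exact (pow_le_pow_iff_left₀ (norm_nonneg _) (by positivity) two_ne_zero).1
    (le_of_mul_le_mul_left hsq hm)

section OptPartition

variable {k : ℕ} {X : Finset (Pt d)} {Xs : Fin k → Finset (Pt d)}

lemma IsOptPartition.phi_eq_sum (hopt : IsOptPartition k X Xs) (C : Finset (Pt d)) :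
    Phi C X = ∑ r, Phi C (Xs r) := by
  rw [← hopt.2.2.1, phi_biUnion]
  exact fun a _ b _ hab => hopt.2.1 a b hab

lemma IsOptPartition.delta1_le_deltaK (hopt : IsOptPartition k X Xs) (q : Fin k) :
    Delta1 (Xs q) ≤ DeltaK k X := by
  rw [← hopt.2.2.2]
  exact Finset.single_le_sum (fun r _ => delta1_nonneg (Xs r)) (Finset.mem_univ q)

lemma IsOptPartition.norm_sub_ctr_le [Infinite (Pt d)] (hopt : IsOptPartition k X Xs)
    {q : Fin k} {x : Pt d} (hx : x ∈ Xs q) (p : Fin k) :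
    ‖x - ctr (Xs q)‖ ≤ ‖x - ctr (Xs p)‖ := by
  set M := Finset.univ.image fun r => ctr (Xs r)
  have hM : ∀ r, ctr (Xs r) ∈ M := fun r => Finset.mem_image_of_mem _ (Finset.mem_univ r)
  have hle : ∀ r, ∀ y ∈ Xs r, Phi M {y} ≤ ‖y - ctr (Xs r)‖ ^ 2 :=
    fun r y _ => phi_singleton_le_of_mem (hM r) y
  -- the `k` centroids cost no less than the optimum, but no more on any single point
  have hopt_le : ∑ r, ∑ y ∈ Xs r, ‖y - ctr (Xs r)‖ ^ 2 ≤ ∑ r, ∑ y ∈ Xs r, Phi M {y} :=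
    calc ∑ r, ∑ y ∈ Xs r, ‖y - ctr (Xs r)‖ ^ 2 = ∑ r, Delta1 (Xs r) := by
          simp only [Delta1, phi_singleton_left]
      _ = DeltaK k X := hopt.2.2.2
      _ ≤ Phi M X := deltaK_le_phi ⟨_, hM q⟩ (Finset.card_image_le.trans (by simp))
      _ = ∑ r, ∑ y ∈ Xs r, Phi M {y} := by
          rw [hopt.phi_eq_sum]
          exact Finset.sum_congr rfl fun r _ => phi_eq_sum_phi_singleton M (Xs r)
  have hcluster := (Finset.sum_eq_sum_iff_of_le fun r _ => Finset.sum_le_sum (hle r)).1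
    (le_antisymm (Finset.sum_le_sum fun r _ => Finset.sum_le_sum (hle r)) hopt_le)
    q (Finset.mem_univ q)
  have hpoint := (Finset.sum_eq_sum_iff_of_le (hle q)).1 hcluster x hx
  refine (pow_le_pow_iff_left₀ (norm_nonneg _) (norm_nonneg _) two_ne_zero).1 ?_
  exact hpoint ▸ phi_singleton_le_of_mem (hM p) x

lemma IsOptPartition.mul_delta1_le [Infinite (Pt d)] (hopt : IsOptPartition k X Xs) {ε : ℝ}
    (hε : 0 ≤ ε) (hirr : KIrreducible k ε X) {p q : Fin k} (hpq : p ≠ q) :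
    ε * Delta1 (Xs q) ≤ (Xs q).card * ‖ctr (Xs p) - ctr (Xs q)‖ ^ 2 := by
  set C' := (Finset.univ.erase q).image fun r => ctr (Xs r)
  have hmem : ∀ r, r ≠ q → ctr (Xs r) ∈ C' :=
    fun r hr => Finset.mem_image_of_mem _ (Finset.mem_erase.2 ⟨hr, Finset.mem_univ r⟩)
  have hcard : C'.card ≤ k - 1 := Finset.card_image_le.trans (by simp)
  have hcost : Phi C' X ≤ DeltaK k X + (Xs q).card * ‖ctr (Xs p) - ctr (Xs q)‖ ^ 2 :=
    calc Phi C' X = Phi C' (Xs q) + ∑ r ∈ Finset.univ.erase q, Phi C' (Xs r) := by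
          rw [hopt.phi_eq_sum, ← Finset.add_sum_erase _ _ (Finset.mem_univ q)]
      _ ≤ Phi {ctr (Xs p)} (Xs q) + ∑ r ∈ Finset.univ.erase q, Delta1 (Xs r) :=
          add_le_add (phi_le_phi_singleton (hmem p hpq) _) (Finset.sum_le_sum fun r hr =>
            phi_le_phi_singleton (hmem r (Finset.ne_of_mem_erase hr)) _)
      _ = DeltaK k X + (Xs q).card * ‖ctr (Xs p) - ctr (Xs q)‖ ^ 2 := by
          rw [phi_singleton_eq_delta1_add (hopt.1 q), ← hopt.2.2.2,
            ← Finset.add_sum_erase _ _ (Finset.mem_univ q)]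
          ring
  have hdrop : (1 + ε) * DeltaK k X ≤ Phi C' X :=
    hirr.trans (deltaK_le_phi ⟨_, hmem p hpq⟩ hcard)
  nlinarith [mul_le_mul_of_nonneg_left (hopt.delta1_le_deltaK q) hε]

end OptPartition

section Invariant

variable {k i : ℕ} {ε : ℝ} {X Ci : Finset (Pt d)} {Xs : Fin k → Finset (Pt d)}
  {c : Fin k → Pt d}

lemma InvariantP.mem (hinv : InvariantP ε X Xs i c Ci) {p : Fin k} (hp : p.val < i) :
    c p ∈ Ci :=
  hinv.1 ▸ Finset.mem_image_of_mem c (Finset.mem_filter.2 ⟨Finset.mem_univ p, hp⟩)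

lemma InvariantP.exists_lt_phi_singleton_eq (hinv : InvariantP ε X Xs i c Ci) (x : Pt d) :
    ∃ p : Fin k, p.val < i ∧ Phi Ci {x} = ‖x - c p‖ ^ 2 := by
  obtain ⟨c', hc', hx⟩ := exists_phi_singleton_eq (nonempty_of_phi_pos hinv.2.2) x
  rw [hinv.1] at hc'
  obtain ⟨p, hp, rfl⟩ := Finset.mem_image.1 hc'
  exact ⟨p, (Finset.mem_filter.1 hp).2, hx⟩

theorem InvariantP.mul_phi_le_card_mul_phi_singleton
    (hinv : InvariantP ε X Xs i c Ci) (hopt : IsOptPartition k X Xs) (hirr : KIrreducible k ε X)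
    (hε0 : 0 ≤ ε) (hε : ε ≤ 1 / 2) {j : Fin k} (hj : i ≤ j.val) {x : Pt d} (hx : x ∈ Xs j) :
    ε * Phi Ci (Xs j) ≤ 32 * (Xs j).card * Phi Ci {x} := by
  have := infinite_of_phi_pos hinv.2.2
  obtain ⟨p, hp, hxp⟩ := hinv.exists_lt_phi_singleton_eq x
  have hpj : p ≠ j := Fin.ne_of_val_ne (by omega)
  set D := ‖ctr (Xs p) - ctr (Xs j)‖
  have hδ : ‖c p - ctr (Xs p)‖ ≤ D / 4 := by
    have hsep := hopt.mul_delta1_le hε0 hirr hpj.symm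
    rw [norm_sub_rev] at hsep
    exact norm_sub_ctr_le_of_phi_le (hopt.1 p) (hinv.2.1 p hp) hsep (norm_nonneg _)
  have hDx : D ^ 2 ≤ 16 * Phi Ci {x} := by
    have hfar := div_four_le_norm_sub (hopt.norm_sub_ctr_le hx p) hδ
    have := pow_le_pow_left₀ (by positivity) hfar 2
    rw [hxp]
    linarith
  have hcj : ‖c p - ctr (Xs j)‖ ≤ 5 / 4 * D := by
    linarith [norm_sub_le_norm_sub_add_norm_sub (c p) (ctr (Xs p)) (ctr (Xs j))]
  have hcost : Phi Ci (Xs j) ≤ Delta1 (Xs j) + (Xs j).card * (5 / 4 * D) ^ 2 := by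
    refine (phi_le_phi_singleton (hinv.mem hp) _).trans ?_
    rw [phi_singleton_eq_delta1_add (hopt.1 j)]
    gcongr
  have hsep := hopt.mul_delta1_le hε0 hirr hpj
  have hmD : 0 ≤ ((Xs j).card : ℝ) * D ^ 2 := by positivity
  have hmx : 0 ≤ ((Xs j).card : ℝ) * Phi Ci {x} := mul_nonneg (Nat.cast_nonneg _) (phi_nonneg _ _)
  nlinarith [mul_le_mul_of_nonneg_left hcost hε0, mul_le_mul_of_nonneg_right hε hmD,
    mul_le_mul_of_nonneg_left hDx (Nat.cast_nonneg (Xs j).card)]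

theorem InvariantP.mul_phi_singleton_le_half_phi_singleton (hinv : InvariantP ε X Xs i c Ci)
    (hopt : IsOptPartition k X Xs) (hirr : KIrreducible k ε X) (hε0 : 0 ≤ ε) (hε : ε ≤ 1 / 2)
    {j : Fin k} (hj : i ≤ j.val) {s : Pt d}
    (hsY : Phi Ci {s} ≤ (2 / ((Xs j).card : ℝ)) * Phi Ci (Xs j)) {x : Pt d} (hx : x ∈ Xs j) :
    ε / 128 * Phi Ci {s} ≤ Phi Ci {x} / 2 := by
  have hm : (0 : ℝ) < (Xs j).card := by exact_mod_cast (hopt.1 j).card_pos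
  rw [div_mul_eq_mul_div, le_div_iff₀ hm] at hsY
  refine le_of_mul_le_mul_left ?_ hm
  nlinarith [hinv.mul_phi_le_card_mul_phi_singleton hopt hirr hε0 hε hj hx,
    mul_le_mul_of_nonneg_left hsY hε0]

end Invariant

theorem stmt_14_general {d k : ℕ} (ε : ℝ) (hε0 : 0 < ε) (hε : ε ≤ 1 / 2)
    (X : Finset (Pt d)) (hirr : KIrreducible k ε X)
    (Xs : Fin k → Finset (Pt d)) (hopt : IsOptPartition k X Xs)
    (i : ℕ)
    (c : Fin k → Pt d) (Ci : Finset (Pt d)) (hinv : InvariantP ε X Xs i c Ci)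
    (j : Fin k) (hj : i ≤ j.val) (s : Pt d) (hsX : s ∈ Xs j)
    (hsY : Phi Ci {s} ≤ (2 / ((Xs j).card : ℝ)) * Phi Ci (Xs j)) :
    (∀ x ∈ Xs j, (ε / 128) * Phi Ci {s} / Phi Ci {x} ≤ 1) ∧
    (∀ x ∈ Xs j,
      (Phi Ci {x} / Phi Ci X) * ((ε / 128) * Phi Ci {s} / Phi Ci {x}) =
        (ε / 128) * Phi Ci {s} / Phi Ci X) ∧
    ((ε / (8 * k)) * Phi Ci X ≤ Phi Ci (Xs j) →
      ε ^ 3 / (2 ^ 16 * k) ≤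
        ∑ x ∈ Xs j, (Phi Ci {x} / Phi Ci X) * ((ε / 128) * Phi Ci {s} / Phi Ci {x})) := by
  have hacc : ∀ x ∈ Xs j, ε / 128 * Phi Ci {s} ≤ Phi Ci {x} / 2 :=
    fun x hx => hinv.mul_phi_singleton_le_half_phi_singleton hopt hirr hε0.le hε hj hsY hx
  have hb : ∀ x ∈ Xs j, (Phi Ci {x} / Phi Ci X) * ((ε / 128) * Phi Ci {s} / Phi Ci {x}) =
      (ε / 128) * Phi Ci {s} / Phi Ci X := fun x hx => div_mul_div_cancel_of_imp fun hx0 =>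
    le_antisymm (by simpa [hx0] using hacc x hx) (mul_nonneg (by positivity) (phi_nonneg _ _))
  refine ⟨fun x hx => div_le_one_of_le₀ ((hacc x hx).trans (half_le_self (phi_nonneg _ _)))
    (phi_nonneg _ _), hb, fun hJ => ?_⟩
  rw [Finset.sum_congr rfl hb, Finset.sum_const, nsmul_eq_mul]
  have hk : (0 : ℝ) < k := by exact_mod_cast j.pos
  have hmass : ε ^ 2 / (256 * k) * Phi Ci X ≤ (Xs j).card * Phi Ci {s} := by
    have := (mul_le_mul_of_nonneg_left hJ hε0.le).trans
      (hinv.mul_phi_le_card_mul_phi_singleton hopt hirr hε0.le hε hj hsX)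
    calc ε ^ 2 / (256 * k) * Phi Ci X = ε * (ε / (8 * k) * Phi Ci X) / 32 := by ring
      _ ≤ 32 * (Xs j).card * Phi Ci {s} / 32 := by gcongr
      _ = (Xs j).card * Phi Ci {s} := by ring
  calc ε ^ 3 / (2 ^ 16 * k) ≤ 2 * (ε ^ 3 / (2 ^ 16 * k)) :=
        le_mul_of_one_le_left (by positivity) one_le_two
    _ = ε / 128 * (ε ^ 2 / (256 * k) * Phi Ci X) / Phi Ci X := by
        field_simp [hinv.2.2.ne']
        ring
    _ ≤ ε / 128 * ((Xs j).card * Phi Ci {s}) / Phi Ci X := by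
        gcongr
        exact hinv.2.2.le
    _ = (Xs j).card * (ε / 128 * Phi Ci {s} / Phi Ci X) := by ring

/-- Under the invariant `P(i)` (clusters reindexed so the covered clusters
are `X₁, …, X_i`), let `j ∈ {i+1,…,k}` and let `s ∈ Y_j`. Consider one sampling trial:
draw `x` by `D²`-sampling w.r.t. `C_i`; if `x ∈ X_j`, output `x` with probability
`(ε/128)·Φ(C_i,{s})/Φ(C_i,{x})`, else output `⊥`. Then:
(a) the acceptance probability is at most `1` for every `x ∈ X_j` (the trial is well
defined); (b) for every `x ∈ X_j`, `Pr[output = x]`, which equals the `D²`-probability of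
`x` times the acceptance probability, is `(ε/128)·Φ(C_i,{s})/Φ(C_i,X)` — the same for all
points of `X_j`; (c) if moreover `j ∈ J`, then `Pr[output ≠ ⊥] ≥ ε³/(2¹⁶·k)`. -/
theorem stmt_14 {d k : ℕ} (ε : ℝ) (hε0 : 0 < ε) (hε : ε ≤ 1 / 2)
    (X : Finset (Pt d)) (hirr : KIrreducible k ε X)
    (Xs : Fin k → Finset (Pt d)) (hopt : IsOptPartition k X Xs)
    (i : ℕ) (hi : 1 ≤ i) (hik : i < k)
    (c : Fin k → Pt d) (Ci : Finset (Pt d)) (hinv : InvariantP ε X Xs i c Ci)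
    (j : Fin k) (hj : i ≤ j.val) (s : Pt d) (hsX : s ∈ Xs j)
    (hsY : Phi Ci {s} ≤ (2 / ((Xs j).card : ℝ)) * Phi Ci (Xs j)) :
    (∀ x ∈ Xs j, (ε / 128) * Phi Ci {s} / Phi Ci {x} ≤ 1) ∧
    (∀ x ∈ Xs j,
      (Phi Ci {x} / Phi Ci X) * ((ε / 128) * Phi Ci {s} / Phi Ci {x}) =
        (ε / 128) * Phi Ci {s} / Phi Ci X) ∧
    ((ε / (8 * k)) * Phi Ci X ≤ Phi Ci (Xs j) →
      ε ^ 3 / (2 ^ 16 * k) ≤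
        ∑ x ∈ Xs j, (Phi Ci {x} / Phi Ci X) * ((ε / 128) * Phi Ci {s} / Phi Ci {x})) :=
  stmt_14_general ε hε0 hε X hirr Xs hopt i c Ci hinv j hj s hsX hsY
end
end

section
/- Let 0 < ε ≤ 1/2, let k be a positive integer, let X ⊆ ℝ^d be a finite set with |X| ≥ k, and let 1 ≤ i ≤ k. Suppose that for every j with i < j ≤ k, Δ_{j−1}(X) < (1 + ε/((4+ε/2)·k))·Δ_j(X) (i.e., X is not (j, ε/((4+ε/2)k))-irreducible for any such j). Then Δ_i(X) ≤ (1 + ε/4)·Δ_k(X). -/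
/-!
Chaining the hypothesis from `j = k` down to `j = i + 1` gives
`Δ_i(X) ≤ (1 + δ)^(k-i) Δ_k(X)` with `δ = ε / ((4 + ε/2) k)`, and
`(1 + δ)^k ≤ exp (k δ) ≤ exp (ε / (4 + ε/2)) ≤ 1 + ε/4`. The last inequality is tight
(at `ε = 1/2` the two sides differ by less than `10⁻³`), so it needs the cubic Taylor bound for
`exp`.
-/

open Finset
open scoped BigOperators
open Classical

noncomputable section

lemma DeltaK_nonneg {d : ℕ} (k : ℕ) (X : Finset (Pt d)) : 0 ≤ DeltaK k X := by
  refine Real.sInf_nonneg ?_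
  rintro y ⟨C, _, rfl⟩
  exact Phi_nonneg C X

lemma le_pow_mul_of_le_mul_of_pred {a : ℕ → ℝ} {c : ℝ} (hc : 0 ≤ c) {i k : ℕ} (hik : i ≤ k)
    (h : ∀ j, i < j → j ≤ k → a (j - 1) ≤ c * a j) : a i ≤ c ^ (k - i) * a k := by
  induction k, hik using Nat.le_induction with
  | base => simp
  | succ k hik ih =>
    calc a i ≤ c ^ (k - i) * a k := ih fun j hij hjk => h j hij (by omega)
      _ ≤ c ^ (k - i) * (c * a (k + 1)) := by
          gcongr
          simpa using h (k + 1) (by omega) le_rfl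
      _ = c ^ (k + 1 - i) * a (k + 1) := by
          rw [Nat.sub_add_comm hik, pow_succ]; ring

lemma one_add_pow_le_exp_mul {δ : ℝ} (hδ : -1 ≤ δ) (n : ℕ) :
    (1 + δ) ^ n ≤ Real.exp (n * δ) := by
  rw [Real.exp_nat_mul]
  gcongr
  · linarith
  · linarith [Real.add_one_le_exp δ]

lemma exp_div_four_add_half_le {ε : ℝ} (hε0 : 0 ≤ ε) (hε : ε ≤ 1 / 2) :
    Real.exp (ε / (4 + ε / 2)) ≤ 1 + ε / 4 := by
  set s := ε / (4 + ε / 2)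
  have hs0 : 0 ≤ s := by positivity
  have hs_mul : s * (4 + ε / 2) = ε := div_mul_cancel₀ ε (by positivity)
  have hs1 : s ≤ 1 := by nlinarith
  have hs_le : s ≤ ε / 4 := by nlinarith
  -- `ε / 4` exceeds the quadratic Taylor polynomial of `exp s` by `s² ε / 16`,
  -- which absorbs the cubic remainder since `s ≤ ε / 4`.
  have hquarter : ε / 4 = s + s ^ 2 / 2 + s ^ 2 * ε / 16 := by
    linear_combination (-(1 : ℝ) / 4 - s / 8) * hs_mul
  have hcube : s ^ 3 ≤ s ^ 2 * (ε / 4) := by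
    rw [pow_succ]; exact mul_le_mul_of_nonneg_left hs_le (sq_nonneg s)
  calc Real.exp s
      ≤ (∑ m ∈ range 3, s ^ m / m.factorial) + s ^ 3 * (3 + 1) / (Nat.factorial 3 * 3) :=
        Real.exp_bound' hs0 hs1 (by norm_num)
    _ = 1 + s + s ^ 2 / 2 + 2 * s ^ 3 / 9 := by
        simp only [sum_range_succ, range_one, sum_singleton, Nat.factorial]; push_cast; ring
    _ ≤ 1 + ε / 4 := by linarith [mul_nonneg (sq_nonneg s) hε0]

lemma natCast_mul_div_mul_natCast_le {x y : ℝ} (hxy : 0 ≤ x / y) (k : ℕ) :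
    (k : ℝ) * (x / (y * k)) ≤ x / y := by
  calc (k : ℝ) * (x / (y * k)) = x / y * ((k : ℝ) / k) := by rw [div_mul_eq_div_div]; ring
    _ ≤ x / y := mul_le_of_le_one_right hxy (div_self_le_one _)

theorem stmt_16_general {d k : ℕ} (ε : ℝ) (hε0 : 0 < ε) (hε : ε ≤ 1 / 2)
    (X : Finset (Pt d)) (i : ℕ) (hik : i ≤ k)
    (h : ∀ j : ℕ, i < j → j ≤ k →
      DeltaK (j - 1) X < (1 + ε / ((4 + ε / 2) * k)) * DeltaK j X) :
    DeltaK i X ≤ (1 + ε / 4) * DeltaK k X := by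
  set δ : ℝ := ε / ((4 + ε / 2) * k)
  have hδ : 0 ≤ δ := by positivity
  have hchain : DeltaK i X ≤ (1 + δ) ^ (k - i) * DeltaK k X :=
    le_pow_mul_of_le_mul_of_pred (a := (DeltaK · X)) (by linarith) hik
      fun j hij hjk => (h j hij hjk).le
  have hpow : (1 + δ) ^ (k - i) ≤ 1 + ε / 4 :=
    calc (1 + δ) ^ (k - i) ≤ (1 + δ) ^ k := pow_le_pow_right₀ (by linarith) (Nat.sub_le k i)
      _ ≤ Real.exp (k * δ) := one_add_pow_le_exp_mul (by linarith) k
      _ ≤ Real.exp (ε / (4 + ε / 2)) :=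
          Real.exp_le_exp.mpr (natCast_mul_div_mul_natCast_le (by positivity) k)
      _ ≤ 1 + ε / 4 := exp_div_four_add_half_le hε0.le hε
  calc DeltaK i X ≤ (1 + δ) ^ (k - i) * DeltaK k X := hchain
    _ ≤ (1 + ε / 4) * DeltaK k X := by gcongr; exact DeltaK_nonneg k X

/-- Let `0 < ε ≤ 1/2`, `k ≥ 1`, `|X| ≥ k` and `1 ≤ i ≤ k`. If for every
`j` with `i < j ≤ k` the set `X` is not `(j, ε/((4+ε/2)k))`-irreducible, i.e.
`Δ_{j−1}(X) < (1 + ε/((4+ε/2)·k))·Δ_j(X)`, then `Δ_i(X) ≤ (1 + ε/4)·Δ_k(X)`. -/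
theorem stmt_16 {d k : ℕ} (hk : 0 < k) (ε : ℝ) (hε0 : 0 < ε) (hε : ε ≤ 1 / 2)
    (X : Finset (Pt d)) (hcard : k ≤ X.card) (i : ℕ) (hi : 1 ≤ i) (hik : i ≤ k)
    (h : ∀ j : ℕ, i < j → j ≤ k →
      DeltaK (j - 1) X < (1 + ε / ((4 + ε / 2) * k)) * DeltaK j X) :
    DeltaK i X ≤ (1 + ε / 4) * DeltaK k X :=
  stmt_16_general ε hε0 hε X i hik h
end
end
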